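/- arXiv:1902.03946 — 8 statements merged into one kernel-verified Lean document; each statement's English description precedes it below -/
import Mathlib

section
/- A finite distributive lattice is Boolean if and only if its length equals the number of its atoms. -/
/-! Atoms are sup-irreducible, and in a finite distributive lattice the length is the number of
sup-irreducible elements: by Birkhoff's representation an element is determined by the
sup-irreducibles below it, so no chain is longer, while adjoining the sup-irreducibles one at a
time, each maximal among those still missing, gives a chain that long. So the length counts the
atoms iff every sup-irreducible element is an atom, i.e. iff the lattice is atomistic, and a finite
modular lattice is atomistic iff it is complemented. -/

open Order Finset

theorem Order.krullDim_le_of_strictMono_nat {α : Type*} [Preorder α] {f : α → ℕ}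
    (hf : StrictMono f) {n : ℕ} (hn : ∀ a, f a ≤ n) : krullDim α ≤ n :=
  calc krullDim α ≤ krullDim (Set.Iic n) :=
        krullDim_le_of_strictMono (fun a => ⟨f a, hn a⟩) fun _ _ h => hf h
    _ = n := by rw [← height_eq_krullDim_Iic, height_nat]; rfl

section SemilatticeSup

variable {α : Type*} [SemilatticeSup α] [OrderBot α]

theorem IsAtom.supIrred {a : α} (ha : IsAtom a) : SupIrred a := by
  refine ⟨fun hmin => ha.1 hmin.eq_bot, ?_⟩
  rintro b c rfl
  rcases (le_sup_left : b ≤ b ⊔ c).lt_or_eq with h | h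
  · right
    rw [ha.2 b h, bot_sup_eq]
  · exact Or.inl h

theorem isAtomistic_iff_forall_supIrred_isAtom [Finite α] :
    IsAtomistic α ↔ ∀ a : α, SupIrred a → IsAtom a := by
  refine ⟨fun _ a ha => ?_, fun h => ⟨fun b => ?_⟩⟩
  · obtain ⟨s, hlub, hs⟩ := isLUB_atoms a
    obtain ⟨t, rfl⟩ := s.toFinite.exists_finset_coe
    obtain ⟨b, hb, rfl⟩ := ha.finset_sup_eq (t.isLUB_sup_id.unique hlub)
    exact hs b hb
  · obtain ⟨s, rfl, hs⟩ := exists_supIrred_decomposition b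
    exact ⟨s, s.isLUB_sup_id, fun a ha => h a (hs ha)⟩

theorem card_le_height_sup_of_supPrime {s : Finset α} (hs : ∀ a ∈ s, SupPrime a) :
    (#s : ℕ∞) ≤ height (s.sup id) := by
  classical
  induction s using Finset.strongInduction with
  | _ s ih =>
    rcases s.eq_empty_or_nonempty with rfl | hne
    · simp
    obtain ⟨m, hm, hmax⟩ := s.exists_maximal hne
    have hlt : (s.erase m).sup id < s.sup id := by
      refine (sup_mono (s.erase_subset m)).lt_of_not_ge fun hle => ?_
      obtain ⟨b, hb, hmb⟩ := (hs m hm).le_finset_sup.mp ((le_sup (f := id) hm).trans hle)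
      exact ne_of_mem_erase hb (le_antisymm (hmax (mem_of_mem_erase hb) hmb) hmb)
    calc (#s : ℕ∞) = #(s.erase m) + 1 := by rw [← card_erase_add_one hm]; push_cast; rfl
      _ ≤ height ((s.erase m).sup id) + 1 := by
        gcongr
        exact ih _ (s.erase_ssubset hm) fun a ha => hs a (mem_of_mem_erase ha)
      _ ≤ height (s.sup id) := height_add_one_le hlt

end SemilatticeSup

section DistribLattice

variable {α : Type*} [DistribLattice α] [Finite α]

theorem ncard_supIrred_le_krullDim [OrderBot α] :
    ({a : α | SupIrred a}.ncard : WithBot ℕ∞) ≤ krullDim α := by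
  set J := (Set.toFinite {a : α | SupIrred a}).toFinset
  have hJ : ∀ a ∈ J, SupPrime a := fun a ha => ((Set.Finite.mem_toFinset _).mp ha).supPrime
  rw [Set.ncard_eq_toFinset_card _ (Set.toFinite _)]
  exact (WithBot.coe_le_coe.mpr (card_le_height_sup_of_supPrime hJ)).trans (height_le_krullDim _)

theorem krullDim_le_ncard_supIrred : krullDim α ≤ {a : α | SupIrred a}.ncard := by
  classical
  have := Fintype.ofFinite α
  refine krullDim_le_of_strictMono_nat
    (Finset.card_strictMono.comp OrderEmbedding.birkhoffFinset.strictMono) fun a => ?_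
  rw [← Nat.card_coe_set_eq, Nat.card_eq_fintype_card]
  exact card_le_univ _

theorem krullDim_eq_ncard_supIrred [OrderBot α] : krullDim α = {a : α | SupIrred a}.ncard :=
  krullDim_le_ncard_supIrred.antisymm ncard_supIrred_le_krullDim

theorem complementedLattice_iff_forall_supIrred_isAtom [BoundedOrder α] :
    ComplementedLattice α ↔ ∀ a : α, SupIrred a → IsAtom a := by
  have := Fintype.ofFinite α
  let := Fintype.toCompleteLattice α
  have := CompleteLattice.isCompactlyGenerated_of_wellFoundedGT (α := α)
  rw [complementedLattice_iff_isAtomistic, isAtomistic_iff_forall_supIrred_isAtom]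

end DistribLattice

/-- A finite distributive lattice is Boolean iff its length equals the number of its atoms. -/
theorem finite_distrib_boolean_iff_length_eq_card_atoms
    {α : Type*} [DistribLattice α] [BoundedOrder α] [Fintype α] :
    ComplementedLattice α ↔
      Order.krullDim α = ({a : α | IsAtom a}.ncard : ℕ) := by
  have hsub : {a : α | IsAtom a} ⊆ {a | SupIrred a} := fun _ ha => IsAtom.supIrred ha
  rw [complementedLattice_iff_forall_supIrred_isAtom, krullDim_eq_ncard_supIrred, Nat.cast_inj]
  refine ⟨fun h => by rw [hsub.antisymm h], fun h a ha => ?_⟩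
  exact (Set.eq_of_subset_of_ncard_le hsub h.le).superset ha
end

section
/- Let R ⊆ S be a ring extension such that the lattice of intermediate R-subalgebras of S is distributive and satisfies the upper covering condition. If y ∈ S \ R, x ∈ S \ R[y], and R ⊆ R[x] is a minimal extension (i.e., R[x] is an atom in the lattice of intermediate subalgebras), then R[x, y] = R[x + y]. -/
/-- In a ring extension whose lattice of intermediate `R`-subalgebras is distributive and
satisfies the upper covering condition, if `y ∉ R`, `x ∉ R[y]` and `R ⊆ R[x]` is minimal,
then `R[x, y] = R[x + y]`. -/
theorem adjoin_pair_eq_adjoin_add {R S : Type*} [CommRing R] [CommRing S] [Algebra R S]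
    (hdistrib : ∀ A B C : Subalgebra R S, A ⊓ (B ⊔ C) = (A ⊓ B) ⊔ (A ⊓ C))
    (hucc : ∀ T U : Subalgebra R S, T ⊓ U ⋖ T → U ⋖ T ⊔ U)
    (x y : S) (hy : y ∉ (⊥ : Subalgebra R S)) (hx : x ∉ Algebra.adjoin R {y})
    (hmin : IsAtom (Algebra.adjoin R {x})) :
    Algebra.adjoin R ({x, y} : Set S) = Algebra.adjoin R {x + y} := by
  set A := Algebra.adjoin R {x} with hA
  set B := Algebra.adjoin R {y} with hB
  set C := Algebra.adjoin R {x + y} with hC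
  have hxA : x ∈ A := Algebra.subset_adjoin rfl
  have hyB : y ∈ B := Algebra.subset_adjoin rfl
  have hxyC : x + y ∈ C := Algebra.subset_adjoin rfl
  have hpair : Algebra.adjoin R ({x, y} : Set S) = A ⊔ B := by
    rw [hA, hB, ← Algebra.adjoin_union]
    rfl
  rw [hpair]
  -- C ≤ A ⊔ B
  have hCle : C ≤ A ⊔ B := by
    rw [hC]
    apply Algebra.adjoin_le
    rintro z rfl
    exact add_mem (le_sup_left (a := A) (b := B) hxA) (le_sup_right (a := A) (b := B) hyB)
  -- A ⊔ C = A ⊔ B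
  have hAC : A ⊔ C = A ⊔ B := by
    apply le_antisymm (sup_le le_sup_left hCle)
    apply sup_le le_sup_left
    rw [hB, Algebra.adjoin_le_iff, Set.singleton_subset_iff]
    have : y = (x + y) - x := by ring
    rw [this]
    exact sub_mem (le_sup_right (a := A) (b := C) hxyC) (le_sup_left (a := A) (b := C) hxA)
  -- B ⊔ C = A ⊔ B
  have hBC : B ⊔ C = A ⊔ B := by
    apply le_antisymm (sup_le le_sup_right hCle)
    apply sup_le ?_ le_sup_left
    rw [hA, Algebra.adjoin_le_iff, Set.singleton_subset_iff]
    have : x = (x + y) - y := by ring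
    rw [this]
    exact sub_mem (le_sup_right (a := B) (b := C) hxyC) (le_sup_left (a := B) (b := C) hyB)
  by_cases hAleC : A ≤ C
  · rw [← hAC, sup_eq_right.mpr hAleC]
  · -- A ⊓ C < A, so A ⊓ C = ⊥ since A is an atom
    have hACbot : A ⊓ C = ⊥ := by
      apply hmin.2
      exact lt_of_le_of_ne inf_le_left (fun h => hAleC (h ▸ inf_le_right))
    -- distributivity: C = C ⊓ (A ⊔ B) = (C ⊓ A) ⊔ (C ⊓ B) = C ⊓ B ≤ B
    have hCleB : C ≤ B := by
      have := hdistrib C A B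
      rw [inf_of_le_left hCle, inf_comm C A, hACbot, bot_sup_eq] at this
      rw [this]
      exact inf_le_right
    -- then A ⊔ B = B ⊔ C = B, so x ∈ B, contradiction
    have : A ⊔ B = B := by rw [← hBC, sup_eq_left.mpr hCleB]
    exact absurd (this ▸ (le_sup_left (a := A) (b := B) hxA)) hx
end

section
/- Let R ⊆ S be an extension of commutative rings whose lattice of intermediate R-subalgebras is distributive. If T ∈ [R,S] is a product (compositum) of finitely many atoms R[x₁], ..., R[xₙ] where each R ⊆ R[xᵢ] is minimal and the R[xᵢ] are distinct, then T = R[x₁ + ⋯ + xₙ]; in particular R ⊆ T is a simple extension. -/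
/-!
Let `A = R[x₁ + ⋯ + xₙ] ⊆ T`. If some atom `R[xᵢ]` were not below `A`, it would be disjoint
from `A`, and distributivity would push `A ≤ R[xᵢ] ⊔ Bᵢ` (with `Bᵢ` the compositum of the other
atoms) down to `A ≤ Bᵢ`. Then `xᵢ = (x₁ + ⋯ + xₙ) - ∑_{j ≠ i} xⱼ ∈ Bᵢ`, so the atom `R[xᵢ]`,
being sup-prime in a distributive lattice, lies below some `R[xⱼ]` with `j ≠ i`, i.e. equals it.
-/

open Finset

section DistribLattice

variable {α ι : Type*} [DistribLattice α] [OrderBot α]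

theorem IsAtom.supPrime {a : α} (ha : IsAtom a) : SupPrime a := by
  refine ⟨fun hmin => ha.1 hmin.eq_bot, fun {b c} hle => ?_⟩
  by_cases hb : a ≤ b
  · exact Or.inl hb
  · exact Or.inr (Disjoint.left_le_of_le_sup_left hle (ha.not_le_iff_disjoint.mp hb))

theorem not_le_finset_sup_erase_of_isAtom {f : ι → α} (hf : Function.Injective f)
    (hatom : ∀ i, IsAtom (f i)) [DecidableEq ι] (s : Finset ι) (i : ι) :
    ¬f i ≤ (s.erase i).sup f := by
  intro hle
  obtain ⟨j, hj, hij⟩ := (hatom i).supPrime.le_finset_sup.mp hle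
  exact (mem_erase.mp hj).1 (hf ((hatom j).le_iff_eq (hatom i).1 |>.mp hij)).symm

end DistribLattice

theorem mem_of_sum_mem_of_forall_ne_mem {ι M σ : Type*} [AddCommGroup M] [SetLike σ M]
    [AddSubgroupClass σ M] [DecidableEq ι] (B : σ) {s : Finset ι} {i : ι} (hi : i ∈ s)
    (x : ι → M) (hsum : ∑ j ∈ s, x j ∈ B) (hx : ∀ j ∈ s, j ≠ i → x j ∈ B) : x i ∈ B := by
  rw [eq_sub_of_add_eq (add_sum_erase s x hi)]
  exact sub_mem hsum (sum_mem fun j hj => hx j (mem_of_mem_erase hj) (ne_of_mem_erase hj))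

/-- If `R ⊆ S` is distributive and `T` is the compositum of finitely many distinct atoms
`R[x₁], …, R[xₙ]`, then `T = R[x₁ + ⋯ + xₙ]`; in particular `R ⊆ T` is simple. -/
theorem sup_atoms_eq_adjoin_sum {R S : Type*} [CommRing R] [CommRing S] [Algebra R S]
    (hdistrib : ∀ A B C : Subalgebra R S, A ⊓ (B ⊔ C) = (A ⊓ B) ⊔ (A ⊓ C))
    (n : ℕ) (x : Fin n → S)
    (hatom : ∀ i, IsAtom (Algebra.adjoin R {x i}))
    (hdistinct : Function.Injective fun i => Algebra.adjoin R {x i})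
    (T : Subalgebra R S) (hT : T = ⨆ i, Algebra.adjoin R {x i}) :
    T = Algebra.adjoin R {∑ i, x i} := by
  classical
  let _ : DistribLattice (Subalgebra R S) := .ofInfSupLe fun A B C => (hdistrib A B C).le
  set f : Fin n → Subalgebra R S := fun i => Algebra.adjoin R {x i}
  have hxf (i : Fin n) : x i ∈ f i := Algebra.self_mem_adjoin_singleton R (x i)
  have hsum_le : Algebra.adjoin R {∑ i, x i} ≤ T :=
    Algebra.adjoin_singleton_le (sum_mem fun i _ => hT ▸ le_iSup f i (hxf i))
  refine le_antisymm ?_ hsum_le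
  rw [hT]
  refine iSup_le fun i => ?_
  by_contra hi
  have hsplit : Algebra.adjoin R {∑ i, x i} ≤ f i ⊔ (univ.erase i).sup f := by
    rwa [← sup_insert, insert_erase (mem_univ i), sup_univ_eq_iSup, ← hT]
  have hsum_le_rest :=
    Disjoint.left_le_of_le_sup_left hsplit ((hatom i).not_le_iff_disjoint.mp hi).symm
  refine not_le_finset_sup_erase_of_isAtom hdistinct hatom univ i (Algebra.adjoin_singleton_le ?_)
  exact mem_of_sum_mem_of_forall_ne_mem _ (mem_univ i) x
    (hsum_le_rest (Algebra.self_mem_adjoin_singleton R _))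
    fun j _ hji => le_sup (f := f) (mem_erase.mpr ⟨hji, mem_univ j⟩) (hxf j)
end

section
/- A finite purely inseparable field extension k ⊆ K that is simple (generated by one element) has a totally ordered (chained) lattice of intermediate fields: the intermediate fields are exactly k[α^{p^m}] for 0 ≤ m ≤ n, where K = k[α], α^{p^n} ∈ k, p = char k, and X^{p^n} − α^{p^n} is the minimal polynomial of α over k. -/
open Polynomial

open scoped IntermediateField

/-- A finite purely inseparable simple field extension `K = k[α]`, where the minimal
polynomial of `α` is `X ^ p ^ n - a` with `a = α ^ p ^ n`, has a chained lattice of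
intermediate fields: the intermediate fields are exactly the `k[α ^ p ^ m]`, `0 ≤ m ≤ n`. -/
theorem purelyInseparable_simple_intermediateFields_chained
    {k K : Type*} [Field k] [Field K] [Algebra k K] (p : ℕ) [hp : Fact p.Prime]
    [CharP k p] (α : K) (n : ℕ) (a : k)
    (ha : algebraMap k K a = α ^ p ^ n)
    (hmin : minpoly k α = X ^ p ^ n - C a)
    (hgen : IntermediateField.adjoin k {α} = ⊤) :
    (∀ L : IntermediateField k K, ∃ m ≤ n, L = IntermediateField.adjoin k {α ^ p ^ m}) ∧
      IsChain (· ≤ ·) (Set.univ : Set (IntermediateField k K)) := by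
  have hpn : (p : ℕ) ^ n ≠ 0 := pow_ne_zero n hp.out.ne_zero
  have hmonic : (X ^ p ^ n - C a : k[X]).Monic := monic_X_pow_sub_C a hpn
  have hint : IsIntegral k α := by
    by_contra h
    rw [minpoly.eq_zero h] at hmin
    exact hmonic.ne_zero hmin.symm
  have hfd : FiniteDimensional k K := by
    have : FiniteDimensional k k⟮α⟯ := IntermediateField.adjoin.finiteDimensional hint
    exact ((IntermediateField.equivOfEq hgen).trans
      IntermediateField.topEquiv).toLinearEquiv.finiteDimensional
  -- the key classification
  have key : ∀ L : IntermediateField k K, ∃ m ≤ n,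
      L = IntermediateField.adjoin k {α ^ p ^ m} := by
    intro L
    haveI : CharP L p := charP_of_injective_algebraMap (algebraMap k L).injective p
    haveI : ExpChar L p := ExpChar.prime hp.out
    -- the minimal polynomial of α over L has the form X ^ p ^ m - C y
    have hsep : (minpoly L α).natSepDegree = 1 := by
      rw [minpoly.natSepDegree_eq_one_iff_pow_mem p]
      refine ⟨n, ⟨algebraMap k L a, ?_⟩⟩
      rw [← IsScalarTower.algebraMap_apply, ha]
    obtain ⟨m, y, hminL⟩ := (minpoly.natSepDegree_eq_one_iff_eq_X_pow_sub_C p).1 hsep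
    have hy : algebraMap L K y = α ^ p ^ m := by
      have := minpoly.aeval L α
      rw [hminL] at this
      simpa [sub_eq_zero, eq_comm] using this
    have hmem : α ^ p ^ m ∈ L := hy ▸ y.2
    -- m ≤ n
    have hdvd : minpoly L α ∣ (minpoly k α).map (algebraMap k L) :=
      minpoly.dvd_map_of_isScalarTower k L α
    have hmapne : (minpoly k α).map (algebraMap k L) ≠ 0 := by
      rw [hmin]
      exact (hmonic.map _).ne_zero
    have hdeg : p ^ m ≤ p ^ n := by
      have h1 := Polynomial.natDegree_le_of_dvd hdvd hmapne
      rwa [hminL, hmin, Polynomial.natDegree_map, natDegree_X_pow_sub_C,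
        natDegree_X_pow_sub_C] at h1
    have hmn : m ≤ n := (Nat.pow_le_pow_iff_right hp.out.one_lt).1 hdeg
    set M := IntermediateField.adjoin k {α ^ p ^ m} with hM
    have hML : M ≤ L := by
      rw [hM, IntermediateField.adjoin_le_iff]
      exact Set.singleton_subset_iff.2 hmem
    -- [K : L] = p ^ m
    have hadjL : IntermediateField.adjoin L {α} = ⊤ :=
      IntermediateField.restrictScalars_injective k <| by
        rw [IntermediateField.restrictScalars_top, ← top_le_iff, ← hgen,
          IntermediateField.adjoin_le_iff]
        exact Set.singleton_subset_iff.2 (IntermediateField.mem_adjoin_simple_self L α)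
    have hLK : Module.finrank L K = p ^ m := by
      have h1 := IntermediateField.adjoin.finrank (IsIntegral.tower_top hint : IsIntegral L α)
      rw [hadjL, IntermediateField.finrank_top', hminL, natDegree_X_pow_sub_C] at h1
      exact h1
    -- [K : M] ≤ p ^ m
    have hβ : α ^ p ^ m ∈ M := IntermediateField.mem_adjoin_simple_self k _
    have hadjM : IntermediateField.adjoin M {α} = ⊤ :=
      IntermediateField.restrictScalars_injective k <| by
        rw [IntermediateField.restrictScalars_top, ← top_le_iff, ← hgen,
          IntermediateField.adjoin_le_iff]
        exact Set.singleton_subset_iff.2 (IntermediateField.mem_adjoin_simple_self M α)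
    have hdvdM : minpoly M α ∣ X ^ p ^ m - C (⟨α ^ p ^ m, hβ⟩ : M) :=
      minpoly.dvd M α (by simp [IntermediateField.algebraMap_apply])
    have hMK : Module.finrank M K ≤ p ^ m := by
      have h1 := IntermediateField.adjoin.finrank (IsIntegral.tower_top hint : IsIntegral M α)
      rw [hadjM, IntermediateField.finrank_top'] at h1
      have h2 := Polynomial.natDegree_le_of_dvd hdvdM
        (monic_X_pow_sub_C _ (pow_ne_zero m hp.out.ne_zero)).ne_zero
      rw [natDegree_X_pow_sub_C] at h2
      omega
    -- compare degrees
    have e1 : Module.finrank k M * Module.finrank M K = Module.finrank k K :=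
      Module.finrank_mul_finrank k M K
    have e2 : Module.finrank k L * Module.finrank L K = Module.finrank k K :=
      Module.finrank_mul_finrank k L K
    have hpos : 0 < Module.finrank M K := Module.finrank_pos
    have hle : Module.finrank k L ≤ Module.finrank k M := by
      refine Nat.le_of_mul_le_mul_right ?_ hpos
      calc Module.finrank k L * Module.finrank M K
          ≤ Module.finrank k L * p ^ m := Nat.mul_le_mul_left _ hMK
        _ = Module.finrank k M * Module.finrank M K := by rw [← hLK, e2, e1]
    exact ⟨m, hmn, (IntermediateField.eq_of_le_of_finrank_le hML hle).symm⟩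
  refine ⟨key, ?_⟩
  intro L1 _ L2 _ _
  obtain ⟨m1, hm1, h1⟩ := key L1
  obtain ⟨m2, hm2, h2⟩ := key L2
  have mono : ∀ i j : ℕ, i ≤ j →
      IntermediateField.adjoin k {α ^ p ^ j} ≤ IntermediateField.adjoin k {α ^ p ^ i} := by
    intro i j hij
    rw [IntermediateField.adjoin_le_iff, Set.singleton_subset_iff]
    have : α ^ p ^ j = (α ^ p ^ i) ^ p ^ (j - i) := by
      rw [← pow_mul, ← pow_add, Nat.add_sub_cancel' hij]
    rw [this]
    exact pow_mem (IntermediateField.mem_adjoin_simple_self k _) _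
  rcases le_total m1 m2 with h | h
  · right; rw [h1, h2]; exact mono m1 m2 h
  · left; rw [h1, h2]; exact mono m2 m1 h
end

section
/- A finite Galois field extension k ⊂ L has Boolean lattice of intermediate fields if and only if its Galois group is cyclic of squarefree order. -/
/-- A bounded lattice is Boolean if it is distributive and complemented. -/
def IsBooleanLattice (α : Type*) [Lattice α] [BoundedOrder α] : Prop :=
  (∀ a b c : α, a ⊓ (b ⊔ c) = (a ⊓ b) ⊔ (a ⊓ c)) ∧ ∀ a : α, ∃ b, a ⊓ b = ⊥ ∧ a ⊔ b = ⊤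

/-!
Via the Galois correspondence the lattice of intermediate fields is anti-isomorphic to the
subgroup lattice of `G`, and being Boolean is a self-dual property, so everything happens in
`Subgroup G`. If `G` is cyclic of squarefree order `n`, then `H ↦ primeFactors |H|` identifies
`Subgroup G` with the Boolean lattice of subsets of the primes dividing `n`.

Conversely, let the subgroup lattice be Boolean. If `⟨a⟩ ≠ ⟨b⟩` both have prime order, a
subgroup of prime order of `⟨a * b⟩ ≤ ⟨a⟩ ⊔ ⟨b⟩` is an atom, so by distributivity it equals
`⟨a⟩` or `⟨b⟩`; either way `a, b ∈ ⟨a * b⟩`, contradicting the uniqueness of subgroups of a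
given order in a cyclic group. A subgroup of order `p²` would then contain a unique atom, which
in a complemented distributive lattice forces it to be that atom; hence `|G|` is squarefree.
Now each Sylow subgroup is unique, so `G` is nilpotent, and a nilpotent group of squarefree
order is cyclic.
-/

section Lattice

variable {α β : Type*} [Lattice α] [BoundedOrder α] [Lattice β] [BoundedOrder β]

theorem IsBooleanLattice.of_orderIso (e : α ≃o β) (h : IsBooleanLattice α) :
    IsBooleanLattice β := by
  obtain ⟨hd, hc⟩ := h
  refine ⟨fun a b c => e.symm.injective ?_, fun a => ?_⟩
  · simpa using hd (e.symm a) (e.symm b) (e.symm c)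
  · obtain ⟨b, hinf, hsup⟩ := hc (e.symm a)
    exact ⟨e b, by simpa using congrArg e hinf, by simpa using congrArg e hsup⟩

theorem OrderIso.isBooleanLattice_iff (e : α ≃o β) : IsBooleanLattice α ↔ IsBooleanLattice β :=
  ⟨.of_orderIso e, .of_orderIso e.symm⟩

theorem IsBooleanLattice.orderDual (h : IsBooleanLattice α) : IsBooleanLattice αᵒᵈ := by
  obtain ⟨hd, hc⟩ := h
  let _ : DistribLattice α := .ofInfSupLe fun a b c => (hd a b c).le
  refine ⟨fun a b c => sup_inf_left (OrderDual.ofDual a) _ _, fun a => ?_⟩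
  obtain ⟨b, hinf, hsup⟩ := hc (OrderDual.ofDual a)
  exact ⟨OrderDual.toDual b, hsup, hinf⟩

theorem isBooleanLattice_orderDual_iff : IsBooleanLattice αᵒᵈ ↔ IsBooleanLattice α :=
  ⟨IsBooleanLattice.orderDual, IsBooleanLattice.orderDual⟩

theorem isBooleanLattice_Iic {γ : Type*} [GeneralizedBooleanAlgebra γ] (a : γ) :
    IsBooleanLattice (Set.Iic a) :=
  ⟨fun x y z => Subtype.ext (inf_sup_left (x : γ) y z), fun x =>
    ⟨⟨a \ x, sdiff_le⟩, Subtype.ext inf_sdiff_self_right, Subtype.ext (sup_sdiff_cancel_right x.2)⟩⟩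

theorem IsAtom.le_or_le_of_le_sup (hd : ∀ a b c : α, a ⊓ (b ⊔ c) = a ⊓ b ⊔ a ⊓ c)
    {a b c : α} (hc : IsAtom c) (h : c ≤ a ⊔ b) : c ≤ a ∨ c ≤ b := by
  by_contra! hab
  have hca : c ⊓ a = ⊥ := (hc.le_iff.mp inf_le_left).resolve_right (hab.1 ∘ inf_eq_left.mp)
  have hcb : c ⊓ b = ⊥ := (hc.le_iff.mp inf_le_left).resolve_right (hab.2 ∘ inf_eq_left.mp)
  exact hc.ne_bot (by rw [← inf_eq_left.mpr h, hd, hca, hcb, sup_bot_eq])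

theorem eq_of_le_of_forall_ne_bot_le (hd : ∀ a b c : α, a ⊓ (b ⊔ c) = a ⊓ b ⊔ a ⊓ c)
    (hc : ∀ a : α, ∃ b, a ⊓ b = ⊥ ∧ a ⊔ b = ⊤) {x y : α} (hx : x ≠ ⊥) (hxy : x ≤ y)
    (h : ∀ b ≤ y, b ≠ ⊥ → x ≤ b) : y = x := by
  obtain ⟨c, hinf, hsup⟩ := hc x
  have hyc : y ⊓ c = ⊥ := by
    by_contra hne
    exact hx (le_bot_iff.mp (hinf ▸ le_inf le_rfl ((h _ inf_le_left hne).trans inf_le_right)))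
  calc y = y ⊓ (x ⊔ c) := by rw [hsup, inf_top_eq]
    _ = x := by rw [hd, hyc, sup_bot_eq, inf_eq_right.mpr hxy]

end Lattice

theorem Nat.Squarefree.dvd_iff_primeFactors_subset {m n : ℕ} (hm : Squarefree m) (hn : n ≠ 0) :
    m ∣ n ↔ m.primeFactors ⊆ n.primeFactors := by
  rw [← Nat.prod_primeFactors_dvd_iff hn, Nat.prod_primeFactors_of_squarefree hm]

namespace IsCyclic

variable {G : Type*} [Group G] [Finite G] [IsCyclic G]

theorem mem_of_pow_card_eq_one (K : Subgroup G) {x : G} (hx : x ^ Nat.card K = 1) : x ∈ K := by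
  classical
  cases nonempty_fintype G
  have hK : Finset.univ.filter (· ∈ K) = Finset.univ.filter (· ^ Nat.card K = 1) := by
    refine Finset.eq_of_subset_of_card_le (fun y hy => ?_) ?_
    · simp only [Finset.mem_filter, Finset.mem_univ, true_and] at hy ⊢
      exact orderOf_dvd_iff_pow_eq_one.mp (Subgroup.orderOf_dvd_natCard K hy)
    · exact (card_pow_eq_one_le Nat.card_pos).trans_eq
        (by rw [Nat.card_eq_fintype_card, Fintype.card_subtype])
  simpa using (Finset.ext_iff.mp hK x).mpr (by simpa using hx)

theorem subgroup_le_iff_card_dvd {H K : Subgroup G} : H ≤ K ↔ Nat.card H ∣ Nat.card K :=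
  ⟨Subgroup.card_dvd_of_le, fun h _ hx =>
    mem_of_pow_card_eq_one K
      (orderOf_dvd_iff_pow_eq_one.mp ((Subgroup.orderOf_dvd_natCard H hx).trans h))⟩

theorem subgroup_eq_of_card_eq {H K : Subgroup G} (h : Nat.card H = Nat.card K) : H = K :=
  le_antisymm (subgroup_le_iff_card_dvd.mpr h.dvd) (subgroup_le_iff_card_dvd.mpr h.symm.dvd)

theorem exists_subgroup_card_eq {d : ℕ} (hd : d ∣ Nat.card G) :
    ∃ H : Subgroup G, Nat.card H = d := by
  obtain ⟨g, hg⟩ := exists_ofOrder_eq_natCard (α := G)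
  rw [← hg] at hd
  exact ⟨_, (Nat.card_zpowers _).trans (orderOf_pow_orderOf_div (hg ▸ Nat.card_pos.ne') hd)⟩

noncomputable def subgroupOrderIsoIicPrimeFactors (hG : Squarefree (Nat.card G)) :
    Subgroup G ≃o Set.Iic (Nat.card G).primeFactors :=
  OrderIso.ofSurjective
    (OrderEmbedding.ofMapLEIff
      (fun H => ⟨(Nat.card H).primeFactors,
        Set.mem_Iic.mpr (Nat.primeFactors_mono H.card_subgroup_dvd_card hG.ne_zero)⟩)
      fun H K => by
        rw [Subtype.mk_le_mk, subgroup_le_iff_card_dvd,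
          Nat.Squarefree.dvd_iff_primeFactors_subset
            (hG.squarefree_of_dvd H.card_subgroup_dvd_card) Nat.card_pos.ne'])
    fun ⟨s, hs⟩ => by
      have hdvd : ∏ p ∈ s, p ∣ Nat.card G :=
        Nat.prod_primeFactors_of_squarefree hG ▸ Finset.prod_dvd_prod_of_subset _ _ id hs
      obtain ⟨H, hH⟩ := exists_subgroup_card_eq hdvd
      refine ⟨H, Subtype.ext ?_⟩
      change (Nat.card H).primeFactors = s
      rw [hH, Nat.primeFactors_prod fun p hp => Nat.prime_of_mem_primeFactors (hs hp)]

theorem isBooleanLattice_subgroup (hG : Squarefree (Nat.card G)) :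
    IsBooleanLattice (Subgroup G) :=
  (subgroupOrderIsoIicPrimeFactors hG).isBooleanLattice_iff.mpr (isBooleanLattice_Iic _)

end IsCyclic

namespace Subgroup

variable {G : Type*} [Group G]

theorem isAtom_of_prime_card {H : Subgroup G} (hH : (Nat.card H).Prime) : IsAtom H := by
  have : Finite H := Nat.finite_of_card_ne_zero hH.ne_zero
  refine ⟨fun h => hH.ne_one (card_eq_one.mpr h), fun K hK => card_eq_one.mp ?_⟩
  exact (hH.eq_one_or_self_of_dvd _ (card_dvd_of_le hK.le)).resolve_right
    fun h => hK.ne (eq_of_le_of_card_ge hK.le h.ge)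

theorem exists_le_card_eq_prime {H : Subgroup G} [Finite H] {p : ℕ} (hp : p.Prime)
    (hpH : p ∣ Nat.card H) : ∃ C ≤ H, Nat.card C = p := by
  have := Fact.mk hp
  obtain ⟨x, hx⟩ := exists_prime_orderOf_dvd_card' p hpH
  exact ⟨zpowers (x : G), zpowers_le.mpr x.2, by rw [Nat.card_zpowers, orderOf_coe, hx]⟩

variable [Finite G]

theorem eq_of_le_zpowers_of_card_eq {z : G} {A B : Subgroup G}
    (hA : A ≤ zpowers z) (hB : B ≤ zpowers z) (h : Nat.card A = Nat.card B) : A = B := by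
  have card_subgroupOf {C : Subgroup G} (hC : C ≤ zpowers z) :
      Nat.card (C.subgroupOf (zpowers z)) = Nat.card C :=
    Nat.card_congr (subgroupOfEquivOfLe hC).toEquiv
  have hAB : A.subgroupOf (zpowers z) = B.subgroupOf (zpowers z) :=
    IsCyclic.subgroup_eq_of_card_eq (by rw [card_subgroupOf hA, card_subgroupOf hB, h])
  simpa [inf_eq_left.mpr hA, inf_eq_left.mpr hB] using subgroupOf_inj.mp hAB

theorem eq_of_card_eq_of_prime_card (hd : ∀ a b c : Subgroup G, a ⊓ (b ⊔ c) = a ⊓ b ⊔ a ⊓ c)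
    {A B : Subgroup G} (hA : (Nat.card A).Prime) (hAB : Nat.card A = Nat.card B) : A = B := by
  have : Fact (Nat.card A).Prime := ⟨hA⟩
  have : Fact (Nat.card B).Prime := ⟨hAB ▸ hA⟩
  obtain ⟨a, rfl⟩ := A.isCyclic_iff_exists_zpowers_eq_top.mp (isCyclic_of_prime_card rfl)
  obtain ⟨b, rfl⟩ := B.isCyclic_iff_exists_zpowers_eq_top.mp (isCyclic_of_prime_card rfl)
  by_contra hne
  set z := a * b with hz
  have hz1 : Nat.card (zpowers z) ≠ 1 := fun h =>
    hne (by rw [eq_inv_of_mul_eq_one_right (zpowers_eq_bot.mp (card_eq_one.mp h)), zpowers_inv])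
  obtain ⟨C, hCz, hC⟩ := exists_le_card_eq_prime (Nat.minFac_prime hz1) (Nat.minFac_dvd _)
  have hzAB : zpowers z ≤ zpowers a ⊔ zpowers b :=
    zpowers_le.mpr (mul_mem (mem_sup_left (mem_zpowers a)) (mem_sup_right (mem_zpowers b)))
  have hCatom : IsAtom C := isAtom_of_prime_card (hC ▸ Nat.minFac_prime hz1)
  have hab : a ∈ zpowers z ∧ b ∈ zpowers z := by
    rcases hCatom.le_or_le_of_le_sup hd (hCz.trans hzAB) with h | h
    · have ha := zpowers_le.mp (((isAtom_of_prime_card hA).le_iff_eq hCatom.ne_bot).mp h ▸ hCz)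
      exact ⟨ha, by simpa [hz] using mul_mem (inv_mem ha) (mem_zpowers z)⟩
    · have hb := zpowers_le.mp
        (((isAtom_of_prime_card (hAB ▸ hA)).le_iff_eq hCatom.ne_bot).mp h ▸ hCz)
      exact ⟨by simpa [hz] using mul_mem (mem_zpowers z) (inv_mem hb), hb⟩
  exact hne (eq_of_le_zpowers_of_card_eq (zpowers_le.mpr hab.1) (zpowers_le.mpr hab.2) hAB)

theorem le_of_prime_card_dvd (hd : ∀ a b c : Subgroup G, a ⊓ (b ⊔ c) = a ⊓ b ⊔ a ⊓ c)
    {A B : Subgroup G} (hA : (Nat.card A).Prime) (hAB : Nat.card A ∣ Nat.card B) : A ≤ B := by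
  obtain ⟨C, hCB, hC⟩ := exists_le_card_eq_prime hA hAB
  exact (eq_of_card_eq_of_prime_card hd hA hC.symm).le.trans hCB

theorem squarefree_card_of_isBooleanLattice (h : IsBooleanLattice (Subgroup G)) :
    Squarefree (Nat.card G) := by
  obtain ⟨hd, hc⟩ := h
  refine Nat.squarefree_iff_prime_squarefree.mpr fun p hp hpp => ?_
  have := Fact.mk hp
  obtain ⟨H, hH⟩ := Sylow.exists_subgroup_card_pow_prime p (n := 2) (by rwa [sq])
  obtain ⟨A, hAH, hA⟩ := exists_le_card_eq_prime (H := H) hp (hH ▸ dvd_pow_self p two_ne_zero)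
  -- Every nontrivial subgroup of `H` has order divisible by `p`, so contains `A`; thus `H = A`.
  have hle : ∀ B ≤ H, B ≠ ⊥ → A ≤ B := fun B hBH hB => by
    obtain ⟨i, -, hBi⟩ := (Nat.dvd_prime_pow hp).mp (hH ▸ card_dvd_of_le hBH)
    have hi : i ≠ 0 := by rintro rfl; exact hB (card_eq_one.mp hBi)
    exact le_of_prime_card_dvd hd (hA ▸ hp) (hA ▸ hBi ▸ dvd_pow_self p hi)
  have hHA := eq_of_le_of_forall_ne_bot_le hd hc (isAtom_of_prime_card (hA ▸ hp)).ne_bot hAH hle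
  rw [hHA, hA] at hH
  exact absurd (Nat.pow_right_injective hp.two_le ((pow_one p).trans hH)) (by norm_num)

theorem subsingleton_sylow (hd : ∀ a b c : Subgroup G, a ⊓ (b ⊔ c) = a ⊓ b ⊔ a ⊓ c)
    (hG : Squarefree (Nat.card G)) (p : ℕ) [Fact p.Prime] : Subsingleton (Sylow p G) := by
  refine ⟨fun P Q => Sylow.ext ?_⟩
  have hcard (R : Sylow p G) : Nat.card R = p ^ (Nat.card G).factorization p :=
    R.card_eq_multiplicity
  rcases Nat.le_one_iff_eq_zero_or_eq_one.mp (hG.natFactorization_le_one p) with h | h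
  · rw [card_eq_one.mp ((hcard P).trans (by rw [h, pow_zero])),
      card_eq_one.mp ((hcard Q).trans (by rw [h, pow_zero]))]
  · exact eq_of_card_eq_of_prime_card hd (by rw [hcard P, h, pow_one]; exact Fact.out)
      ((hcard P).trans (hcard Q).symm)

theorem isNilpotent_of_squarefree (hd : ∀ a b c : Subgroup G, a ⊓ (b ⊔ c) = a ⊓ b ⊔ a ⊓ c)
    (hG : Squarefree (Nat.card G)) : Group.IsNilpotent G := by
  refine (Group.isNilpotent_of_finite_tfae.out 0 3).mpr ?_
  intro p hp
  have := subsingleton_sylow hd hG p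
  exact Sylow.normal_of_subsingleton

theorem isBooleanLattice_iff_isCyclic_and_squarefree :
    IsBooleanLattice (Subgroup G) ↔ IsCyclic G ∧ Squarefree (Nat.card G) := by
  refine ⟨fun h => ?_, fun ⟨_, hG⟩ => IsCyclic.isBooleanLattice_subgroup hG⟩
  have hG := squarefree_card_of_isBooleanLattice h
  have := IsZGroup.of_squarefree hG
  have := isNilpotent_of_squarefree h.1 hG
  exact ⟨inferInstance, hG⟩

end Subgroup

/-- A finite Galois extension has Boolean lattice of intermediate fields iff its Galois
group is cyclic of squarefree order. -/
theorem galois_boolean_iff_cyclic_squarefree {k L : Type*} [Field k] [Field L]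
    [Algebra k L] [FiniteDimensional k L] [IsGalois k L] :
    IsBooleanLattice (IntermediateField k L) ↔
      IsCyclic (L ≃ₐ[k] L) ∧ Squarefree (Nat.card (L ≃ₐ[k] L)) := by
  rw [IsGalois.intermediateFieldEquivSubgroup.isBooleanLattice_iff,
    isBooleanLattice_orderDual_iff]
  exact Subgroup.isBooleanLattice_iff_isCyclic_and_squarefree
end

section
/- The lattice of subgroups of a finite group G is Boolean if and only if G is cyclic of squarefree order. -/
section Aux

variable {G : Type*} [Group G]

/-- Distributivity of gcd over lcm for natural numbers. -/
lemma nat_gcd_lcm_distrib {a b c : ℕ} (ha : a ≠ 0) (hb : b ≠ 0) (hc : c ≠ 0) :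
    Nat.gcd a (Nat.lcm b c) = Nat.lcm (Nat.gcd a b) (Nat.gcd a c) := by
  have h1 : Nat.gcd a (Nat.lcm b c) ≠ 0 := Nat.gcd_ne_zero_left ha
  have h2 : Nat.lcm (Nat.gcd a b) (Nat.gcd a c) ≠ 0 :=
    Nat.lcm_ne_zero (Nat.gcd_ne_zero_left ha) (Nat.gcd_ne_zero_left ha)
  refine Nat.eq_of_factorization_eq h1 h2 fun p => ?_
  rw [Nat.factorization_gcd ha (Nat.lcm_ne_zero hb hc),
    Nat.factorization_lcm hb hc,
    Nat.factorization_lcm (Nat.gcd_ne_zero_left ha) (Nat.gcd_ne_zero_left ha),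
    Nat.factorization_gcd ha hb, Nat.factorization_gcd ha hc]
  simp only [Finsupp.inf_apply, Finsupp.sup_apply]
  exact min_max_distrib_left _ _ _

lemma eq_of_le_of_card_le' [Finite G] {H K : Subgroup G} (h : H ≤ K)
    (hc : Nat.card K ≤ Nat.card H) : H = K := by
  apply SetLike.coe_injective
  refine Set.eq_of_subset_of_ncard_le h ?_ (Set.toFinite _)
  rwa [← Nat.card_coe_set_eq, ← Nat.card_coe_set_eq]

lemma mem_sup_zpowers {Z : Subgroup G} {c : G} (hZc : ∀ z ∈ Z, Commute z c)
    {g : G} (hg : g ∈ Z ⊔ Subgroup.zpowers c) : ∃ z ∈ Z, ∃ k : ℤ, g = z * c ^ k := by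
  have hsup : Z ⊔ Subgroup.zpowers c = Subgroup.closure (↑Z ∪ {c}) := by
    rw [Subgroup.closure_union, Subgroup.closure_eq, Subgroup.zpowers_eq_closure]
  rw [hsup] at hg
  induction hg using Subgroup.closure_induction with
  | mem x hx =>
    rcases hx with hx | hx
    · exact ⟨x, hx, 0, by simp⟩
    · simp only [Set.mem_singleton_iff] at hx
      exact ⟨1, one_mem Z, 1, by simp [hx]⟩
  | one => exact ⟨1, one_mem Z, 0, by simp⟩
  | mul x y hx hy ihx ihy =>
    obtain ⟨z1, hz1, j, rfl⟩ := ihx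
    obtain ⟨z2, hz2, k, rfl⟩ := ihy
    refine ⟨z1 * z2, mul_mem hz1 hz2, j + k, ?_⟩
    have h : Commute (c ^ j) z2 := ((hZc z2 hz2).zpow_right j).symm
    rw [zpow_add]
    calc z1 * c ^ j * (z2 * c ^ k) = z1 * (c ^ j * z2) * c ^ k := by group
    _ = z1 * (z2 * c ^ j) * c ^ k := by rw [h.eq]
    _ = z1 * z2 * (c ^ j * c ^ k) := by group
  | inv x hx ihx =>
    obtain ⟨z, hz, k, rfl⟩ := ihx
    refine ⟨z⁻¹, inv_mem hz, -k, ?_⟩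
    have h : Commute z⁻¹ (c ^ (-k)) := ((hZc z hz).inv_left).zpow_right _
    rw [mul_inv_rev, ← zpow_neg, h.eq]

/-- Ore's observation: if the subgroup lattice is distributive, the group is abelian. -/
lemma commute_of_distrib
    (hdist : ∀ A B C : Subgroup G, A ⊓ (B ⊔ C) = (A ⊓ B) ⊔ (A ⊓ C)) (a b : G) :
    Commute a b := by
  set Z := Subgroup.zpowers a ⊓ Subgroup.zpowers b with hZ
  set c := a * b with hc
  have hZc : ∀ z ∈ Z, Commute z c := by
    intro z hz
    obtain ⟨⟨m, hm⟩, ⟨k, hk⟩⟩ := hz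
    have h1 : Commute z a := by rw [← hm]; exact ((Commute.refl a).zpow_left m)
    have h2 : Commute z b := by rw [← hk]; exact ((Commute.refl b).zpow_left k)
    exact h1.mul_right h2
  have ha : a ∈ Z ⊔ Subgroup.zpowers c := by
    have h1 : a ∈ Subgroup.zpowers b ⊔ Subgroup.zpowers c := by
      have : a = c * b⁻¹ := by rw [hc]; group
      rw [this]
      exact mul_mem (SetLike.le_def.mp le_sup_right (Subgroup.mem_zpowers c))
        (inv_mem (SetLike.le_def.mp le_sup_left (Subgroup.mem_zpowers b)))
    have h2 : a ∈ Subgroup.zpowers a ⊓ (Subgroup.zpowers b ⊔ Subgroup.zpowers c) :=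
      ⟨Subgroup.mem_zpowers a, h1⟩
    rw [hdist] at h2
    exact SetLike.le_def.mp (sup_le_sup le_rfl inf_le_right) h2
  have hb : b ∈ Z ⊔ Subgroup.zpowers c := by
    have h1 : b ∈ Subgroup.zpowers a ⊔ Subgroup.zpowers c := by
      have : b = a⁻¹ * c := by rw [hc]; group
      rw [this]
      exact mul_mem (inv_mem (SetLike.le_def.mp le_sup_left (Subgroup.mem_zpowers a)))
        (SetLike.le_def.mp le_sup_right (Subgroup.mem_zpowers c))
    have h2 : b ∈ Subgroup.zpowers b ⊓ (Subgroup.zpowers a ⊔ Subgroup.zpowers c) :=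
      ⟨Subgroup.mem_zpowers b, h1⟩
    rw [hdist] at h2
    refine SetLike.le_def.mp (sup_le_sup ?_ inf_le_right) h2
    rw [hZ, inf_comm]
  obtain ⟨z1, hz1, j, haa⟩ := mem_sup_zpowers hZc ha
  obtain ⟨z2, hz2, k, hbb⟩ := mem_sup_zpowers hZc hb
  have hz1c := hZc z1 hz1
  have hz2c := hZc z2 hz2
  have hz12 : Commute z1 z2 := by
    obtain ⟨⟨m, hm⟩, -⟩ := hz1
    obtain ⟨⟨l, hl⟩, -⟩ := hz2
    rw [← hm, ← hl]
    exact (Commute.refl a).zpow_zpow m l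
  rw [haa, hbb]
  have h1 : Commute z1 (z2 * c ^ k) := hz12.mul_right (hz1c.zpow_right k)
  have h2 : Commute (c ^ j) (z2 * c ^ k) :=
    ((hz2c.zpow_right j).symm).mul_right ((Commute.refl c).zpow_zpow j k)
  exact h1.mul_left h2

lemma prime_zpowers_inf [Finite G] {p : ℕ} (hp : p.Prime) {a : G} (ha : orderOf a = p)
    (H : Subgroup G) : Subgroup.zpowers a ⊓ H = ⊥ ∨ Subgroup.zpowers a ≤ H := by
  by_cases hmem : a ∈ H
  · exact Or.inr ((Subgroup.zpowers_le).mpr hmem)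
  left
  rw [eq_bot_iff]
  rintro x ⟨hxa, hxH⟩
  simp only [Subgroup.mem_bot]
  by_contra hx1
  have hxp : x ^ p = 1 := by
    obtain ⟨k, rfl⟩ := hxa
    rw [← zpow_natCast, ← zpow_mul, mul_comm, zpow_mul, zpow_natCast, ← ha,
      pow_orderOf_eq_one, one_zpow]
  have hord : orderOf x = p :=
    ((Nat.Prime.eq_one_or_self_of_dvd hp _ (orderOf_dvd_of_pow_eq_one hxp)).resolve_left
      (by simpa using hx1))
  have heq : Subgroup.zpowers x = Subgroup.zpowers a := by
    apply eq_of_le_of_card_le' (Subgroup.zpowers_le.mpr hxa)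
    rw [Nat.card_zpowers, Nat.card_zpowers, hord, ha]
  exact hmem (Subgroup.zpowers_le.mpr hxH (heq.ge (Subgroup.mem_zpowers a)))

lemma zpowers_eq_of_prime_order [Finite G]
    {p : ℕ} (hp : p.Prime) {a b : G} (hcomm : Commute a b)
    (ha : orderOf a = p) (hb : orderOf b = p)
    (hdist : ∀ A B C : Subgroup G, A ⊓ (B ⊔ C) = (A ⊓ B) ⊔ (A ⊓ C)) :
    Subgroup.zpowers a = Subgroup.zpowers b := by
  by_contra hne
  have hba : b ∉ Subgroup.zpowers a := by
    intro h
    exact hne (eq_of_le_of_card_le' (Subgroup.zpowers_le.mpr h)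
      (by rw [Nat.card_zpowers, Nat.card_zpowers, ha, hb])).symm
  set c := a * b with hc
  have hcne : c ≠ 1 := by
    intro h
    apply hba
    have hb' : b = a⁻¹ := eq_inv_of_mul_eq_one_right (hc.symm.trans h)
    rw [hb']; exact inv_mem (Subgroup.mem_zpowers a)
  have hcp : c ^ p = 1 := by
    rw [hc, hcomm.mul_pow, ← ha, pow_orderOf_eq_one, ha, ← hb, pow_orderOf_eq_one, one_mul]
  have hordc : orderOf c = p :=
    ((Nat.Prime.eq_one_or_self_of_dvd hp _ (orderOf_dvd_of_pow_eq_one hcp)).resolve_left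
      (by simpa using hcne))
  have hAB : Subgroup.zpowers a ⊓ Subgroup.zpowers b = ⊥ := by
    refine (prime_zpowers_inf hp ha _).resolve_right fun h => hne ?_
    exact eq_of_le_of_card_le' h (by rw [Nat.card_zpowers, Nat.card_zpowers, ha, hb])
  have hAC : Subgroup.zpowers a ⊓ Subgroup.zpowers c = ⊥ := by
    refine (prime_zpowers_inf hp ha _).resolve_right fun h => ?_
    have heq : Subgroup.zpowers a = Subgroup.zpowers c :=
      eq_of_le_of_card_le' h (by rw [Nat.card_zpowers, Nat.card_zpowers, ha, hordc])
    apply hba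
    have hcmem : c ∈ Subgroup.zpowers a := heq.ge (Subgroup.mem_zpowers c)
    have hbeq : b = a⁻¹ * c := by rw [hc]; group
    rw [hbeq]
    exact mul_mem (inv_mem (Subgroup.mem_zpowers a)) hcmem
  have haBC : Subgroup.zpowers a ≤ Subgroup.zpowers b ⊔ Subgroup.zpowers c := by
    rw [Subgroup.zpowers_le]
    have haeq : a = c * b⁻¹ := by rw [hc]; group
    rw [haeq]
    exact mul_mem (SetLike.le_def.mp le_sup_right (Subgroup.mem_zpowers c))
      (inv_mem (SetLike.le_def.mp le_sup_left (Subgroup.mem_zpowers b)))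
  have hbot : Subgroup.zpowers a = ⊥ := by
    rw [← inf_eq_left.mpr haBC, hdist, hAB, hAC, sup_idem]
  have ha1 : a = 1 := by
    have := Subgroup.mem_zpowers a
    rwa [hbot, Subgroup.mem_bot] at this
  rw [ha1, orderOf_one] at ha
  exact hp.one_lt.ne' ha.symm

/-- The set underlying a subgroup of a finite cyclic group consists of the solutions of
`x ^ d = 1` where `d` is the order of the subgroup. -/
lemma coe_eq_pow_card_eq_one [Finite G] [IsCyclic G] (H : Subgroup G) :
    (H : Set G) = {x : G | x ^ Nat.card H = 1} := by
  classical
  have _inst := Fintype.ofFinite G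
  have hsub : (H : Set G) ⊆ {x : G | x ^ Nat.card H = 1} := by
    intro x hx
    show x ^ Nat.card H = 1
    have h1 : (⟨x, hx⟩ : H) ^ Nat.card H = 1 := pow_card_eq_one'
    have h2 := congrArg (Subtype.val) h1
    rw [Subgroup.coe_pow, Subgroup.coe_one] at h2
    exact h2
  refine (Set.eq_of_subset_of_ncard_le hsub ?_ (Set.toFinite _)).symm.symm
  have hpos : 0 < Nat.card H := Nat.card_pos
  have hle := IsCyclic.card_pow_eq_one_le (α := G) hpos
  have hset : {x : G | x ^ Nat.card H = 1} =
      ↑(Finset.univ.filter fun a : G => a ^ Nat.card H = 1) := by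
    ext x; simp
  rw [hset, Set.ncard_coe_finset, ← Nat.card_coe_set_eq]
  simpa using hle

lemma le_of_card_dvd [Finite G] [IsCyclic G] {H K : Subgroup G}
    (hdvd : Nat.card H ∣ Nat.card K) : H ≤ K := by
  intro x hx
  have hx1 : x ^ Nat.card H = 1 := by
    have hxS : x ∈ (H : Set G) := hx
    rw [coe_eq_pow_card_eq_one H] at hxS
    exact hxS
  have hx2 : x ^ Nat.card K = 1 := by
    obtain ⟨t, ht⟩ := hdvd
    rw [ht, pow_mul, hx1, one_pow]
  have : x ∈ (K : Set G) := by rw [coe_eq_pow_card_eq_one K]; exact hx2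
  exact this

lemma exists_subgroup_card [Finite G] [IsCyclic G] {d : ℕ} (hd : d ∣ Nat.card G) :
    ∃ H : Subgroup G, Nat.card H = d := by
  have hn0 : Nat.card G ≠ 0 := Nat.card_pos.ne'
  obtain ⟨g, hg⟩ := IsCyclic.exists_ofOrder_eq_natCard (α := G)
  refine ⟨Subgroup.zpowers (g ^ (Nat.card G / d)), ?_⟩
  rw [Nat.card_zpowers, orderOf_pow, hg, Nat.gcd_eq_right (Nat.div_dvd_of_dvd hd),
    Nat.div_div_self hd hn0]

lemma card_inf_eq [Finite G] [IsCyclic G] (H K : Subgroup G) :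
    Nat.card (H ⊓ K : Subgroup G) = Nat.gcd (Nat.card H) (Nat.card K) := by
  apply Nat.dvd_antisymm
  · exact Nat.dvd_gcd (Subgroup.card_dvd_of_le inf_le_left)
      (Subgroup.card_dvd_of_le inf_le_right)
  · obtain ⟨L, hL⟩ := exists_subgroup_card
      ((Nat.gcd_dvd_left (Nat.card H) (Nat.card K)).trans (Subgroup.card_subgroup_dvd_card H))
    rw [← hL]
    exact Subgroup.card_dvd_of_le (le_inf
      (le_of_card_dvd (hL ▸ Nat.gcd_dvd_left _ _))
      (le_of_card_dvd (hL ▸ Nat.gcd_dvd_right _ _)))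

lemma card_sup_eq [Finite G] [IsCyclic G] (H K : Subgroup G) :
    Nat.card (H ⊔ K : Subgroup G) = Nat.lcm (Nat.card H) (Nat.card K) := by
  apply Nat.dvd_antisymm
  · obtain ⟨L, hL⟩ := exists_subgroup_card
      (Nat.lcm_dvd (Subgroup.card_subgroup_dvd_card H) (Subgroup.card_subgroup_dvd_card K))
    rw [← hL]
    exact Subgroup.card_dvd_of_le (sup_le
      (le_of_card_dvd (hL ▸ Nat.dvd_lcm_left _ _))
      (le_of_card_dvd (hL ▸ Nat.dvd_lcm_right _ _)))
  · exact Nat.lcm_dvd (Subgroup.card_dvd_of_le le_sup_left)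
      (Subgroup.card_dvd_of_le le_sup_right)

end Aux

/-- The subgroup lattice of a finite group `G` is Boolean iff `G` is cyclic of squarefree
order. -/
theorem subgroup_lattice_boolean_iff_cyclic_squarefree {G : Type*} [Group G] [Finite G] :
    IsBooleanLattice (Subgroup G) ↔ IsCyclic G ∧ Squarefree (Nat.card G) := by
  constructor
  · rintro ⟨hdist, hcompl⟩
    have hcomm : ∀ a b : G, Commute a b := fun a b => commute_of_distrib hdist a b
    have hsq : Squarefree (Nat.card G) := by
      rw [Nat.squarefree_iff_prime_squarefree]
      intro p hp hpp
      have _fact := Fact.mk hp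
      obtain ⟨a, ha⟩ := exists_prime_orderOf_dvd_card' p
        ((dvd_mul_right p p).trans hpp)
      obtain ⟨L, hKL, hKLtop⟩ := hcompl (Subgroup.zpowers a)
      have _norm : L.Normal := ⟨fun x hx g => by
        rw [(hcomm g x).eq, mul_inv_cancel_right]; exact hx⟩
      have hcompl' : Subgroup.IsComplement' (Subgroup.zpowers a) L := by
        apply Subgroup.isComplement'_of_disjoint_and_mul_eq_univ (disjoint_iff.mpr hKL)
        rw [← Subgroup.mul_normal, hKLtop, Subgroup.coe_top]
      have hcard : p * Nat.card L = Nat.card G := by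
        rw [← hcompl'.card_mul, Nat.card_zpowers, ha]
      have hpL : p ∣ Nat.card L := by
        have h := hcard ▸ hpp
        exact (mul_dvd_mul_iff_left (Nat.Prime.pos hp).ne').mp h
      obtain ⟨y, hy⟩ := exists_prime_orderOf_dvd_card' (G := L) p hpL
      have hyG : orderOf (y : G) = p := by
        rw [← hy]
        exact orderOf_injective L.subtype L.subtype_injective y
      have hy1 : (y : G) ≠ 1 := by
        intro h
        rw [h, orderOf_one] at hyG
        exact hp.one_lt.ne' hyG.symm
      have heq := zpowers_eq_of_prime_order hp (hcomm (y : G) a) hyG ha hdist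
      have hmem : (y : G) ∈ Subgroup.zpowers a ⊓ L := ⟨heq ▸ Subgroup.mem_zpowers _, y.2⟩
      rw [hKL] at hmem
      exact hy1 (by simpa using hmem)
    refine ⟨?_, hsq⟩
    letI : CommGroup G := { mul_comm := fun a b => (hcomm a b).eq }
    have hn0 : Nat.card G ≠ 0 := Nat.card_pos.ne'
    have hexp : Monoid.exponent G = Nat.card G := by
      obtain ⟨m, hm⟩ := Group.exponent_dvd_nat_card (G := G)
      rcases eq_or_ne m 1 with rfl | hm1
      · rw [hm, mul_one]
      have hmne : m ≠ 0 := by rintro rfl; rw [hm, mul_zero] at hn0; exact hn0 rfl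
      obtain ⟨p, hp, hpm⟩ := Nat.exists_prime_and_dvd hm1
      have _fact := Fact.mk hp
      have hpn : p ∣ Nat.card G := hm ▸ Dvd.dvd.mul_left hpm _
      obtain ⟨a, haord⟩ := exists_prime_orderOf_dvd_card' p hpn
      have hpe : p ∣ Monoid.exponent G := haord ▸ Monoid.order_dvd_exponent a
      have : p * p ∣ Nat.card G := by
        rw [hm]
        exact mul_dvd_mul hpe hpm
      exact absurd (Nat.isUnit_iff.mp (hsq p this)) hp.one_lt.ne'
    exact IsCyclic.of_exponent_eq_card hexp
  · rintro ⟨hcyc, hsq⟩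
    have hn0 : Nat.card G ≠ 0 := Nat.card_pos.ne'
    have hpos : ∀ H : Subgroup G, Nat.card H ≠ 0 := fun H => Nat.card_pos.ne'
    constructor
    · intro A B C
      have hge : (A ⊓ B) ⊔ (A ⊓ C) ≤ A ⊓ (B ⊔ C) :=
        le_inf (sup_le inf_le_left inf_le_left)
          (sup_le (le_trans inf_le_right le_sup_left) (le_trans inf_le_right le_sup_right))
      have hcards : Nat.card (A ⊓ (B ⊔ C) : Subgroup G)
          = Nat.card ((A ⊓ B) ⊔ (A ⊓ C) : Subgroup G) := by
        rw [card_inf_eq, card_sup_eq, card_sup_eq, card_inf_eq, card_inf_eq]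
        exact nat_gcd_lcm_distrib (hpos A) (hpos B) (hpos C)
      exact le_antisymm (le_of_card_dvd hcards.dvd) hge
    · intro A
      obtain ⟨K, hK⟩ := exists_subgroup_card
        (Nat.div_dvd_of_dvd (Subgroup.card_subgroup_dvd_card A))
      have hmul : Nat.card A * Nat.card K = Nat.card G := by
        rw [hK, Nat.mul_div_cancel' (Subgroup.card_subgroup_dvd_card A)]
      have hcop : Nat.Coprime (Nat.card A) (Nat.card K) := by
        have hdvd : Nat.gcd (Nat.card A) (Nat.card K) * Nat.gcd (Nat.card A) (Nat.card K)
            ∣ Nat.card G := by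
          rw [← hmul]
          exact mul_dvd_mul (Nat.gcd_dvd_left _ _) (Nat.gcd_dvd_right _ _)
        exact Nat.isUnit_iff.mp (hsq _ hdvd)
      refine ⟨K, ?_, ?_⟩
      · rw [← Subgroup.card_eq_one, card_inf_eq]
        exact hcop
      · have : Nat.card (A ⊔ K : Subgroup G) = Nat.card G := by
          rw [card_sup_eq, hcop.lcm_eq_mul, hmul]
        exact Subgroup.eq_top_of_card_eq _ this
end

section
/- A finite group whose subgroup lattice is distributive is cyclic. -/
open Subgroup

/-- Distributivity of the subgroup lattice implies commutativity (Ore). -/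
theorem aux_comm_of_distrib {G : Type*} [Group G]
    (hdistrib : ∀ A B C : Subgroup G, A ⊓ (B ⊔ C) = (A ⊓ B) ⊔ (A ⊓ C))
    (a b : G) : a * b = b * a := by
  letI : DistribLattice (Subgroup G) :=
    DistribLattice.ofInfSupLe fun A B C => (hdistrib A B C).le
  set A := zpowers a with hA
  set B := zpowers b with hB
  set C := zpowers (a * b) with hC
  have hCA : C ⊔ A = A ⊔ B := by
    apply le_antisymm
    · refine sup_le ?_ le_sup_left
      rw [hC, zpowers_le]
      exact mul_mem (mem_sup_left (mem_zpowers a)) (mem_sup_right (mem_zpowers b))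
    · refine sup_le le_sup_right ?_
      rw [hB, zpowers_le]
      have : b = a⁻¹ * (a * b) := by group
      rw [this]
      exact mul_mem (inv_mem (mem_sup_right (mem_zpowers a))) (mem_sup_left (mem_zpowers (a * b)))
  have hCB : C ⊔ B = A ⊔ B := by
    apply le_antisymm
    · refine sup_le ?_ le_sup_right
      rw [hC, zpowers_le]
      exact mul_mem (mem_sup_left (mem_zpowers a)) (mem_sup_right (mem_zpowers b))
    · refine sup_le ?_ le_sup_right
      rw [hA, zpowers_le]
      have : a = (a * b) * b⁻¹ := by group
      rw [this]
      exact mul_mem (mem_sup_left (mem_zpowers (a * b))) (inv_mem (mem_sup_right (mem_zpowers b)))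
  have key : A ⊔ B = C ⊔ (A ⊓ B) := by
    rw [sup_inf_left, hCA, hCB, inf_idem]
  have hcent : C ⊔ (A ⊓ B) ≤ Subgroup.centralizer {a * b} := by
    refine sup_le ?_ ?_
    · rw [hC, zpowers_le]
      exact Subgroup.mem_centralizer_iff.2 fun g hg => by
        rw [Set.mem_singleton_iff] at hg; rw [hg]
    · rintro z ⟨hza, hzb⟩
      obtain ⟨k, hk⟩ := hza
      obtain ⟨l, hl⟩ := hzb
      refine Subgroup.mem_centralizer_iff.2 fun g hg => ?_
      rw [Set.mem_singleton_iff] at hg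
      subst hg
      have h1 : Commute z a := by rw [← hk]; exact (Commute.refl a).zpow_left k
      have h2 : Commute z b := by rw [← hl]; exact (Commute.refl b).zpow_left l
      exact ((h1.mul_right h2).symm).eq
  have hb : b ∈ Subgroup.centralizer {a * b} := by
    apply hcent
    rw [← key]
    exact mem_sup_right (mem_zpowers b)
  have := Subgroup.mem_centralizer_iff.1 hb (a * b) rfl
  -- (a * b) * b = b * (a * b)
  have h2 : (a * b) * b = (b * a) * b := by
    rw [this]; group
  exact mul_right_cancel h2

/-- At most one subgroup of each prime order: any two elements of order `p`
generate the same cyclic subgroup. -/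
theorem aux_unique_of_distrib {G : Type*} [Group G] [Finite G]
    (hdistrib : ∀ A B C : Subgroup G, A ⊓ (B ⊔ C) = (A ⊓ B) ⊔ (A ⊓ C))
    {p : ℕ} (hp : p.Prime) {u v : G}
    (hu : orderOf u = p) (hv : orderOf v = p) : v ∈ zpowers u := by
  by_contra hvu
  have hcomm := aux_comm_of_distrib hdistrib
  set P := zpowers u with hPdef
  set Q := zpowers v with hQdef
  have hPcard : Nat.card P = p := by rw [hPdef, Nat.card_zpowers, hu]
  have hQcard : Nat.card Q = p := by rw [hQdef, Nat.card_zpowers, hv]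
  set w := u * v with hwdef
  have hw1 : w ≠ 1 := by
    intro h
    apply hvu
    have : v = u⁻¹ := by
      rw [eq_inv_iff_mul_eq_one, hcomm v u, ← hwdef, h]
    rw [this]; exact inv_mem (mem_zpowers u)
  have hwp : w ^ p = 1 := by
    have hc : Commute u v := hcomm u v
    have h1 : u ^ p = 1 := by rw [← hu]; exact pow_orderOf_eq_one u
    have h2 : v ^ p = 1 := by rw [← hv]; exact pow_orderOf_eq_one v
    rw [hwdef, hc.mul_pow, h1, h2, one_mul]
  haveI := Fact.mk hp
  have hworder : orderOf w = p := orderOf_eq_prime hwp hw1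
  set R := zpowers w with hRdef
  have hRcard : Nat.card R = p := by rw [hRdef, Nat.card_zpowers, hworder]
  have hRle : R ≤ P ⊔ Q := by
    rw [hRdef, zpowers_le]
    exact mul_mem (mem_sup_left (mem_zpowers u)) (mem_sup_right (mem_zpowers v))
  -- dichotomy helper
  have dich : ∀ K : Subgroup G, Nat.card K = p → ∀ L : Subgroup G, L ≤ K → L = ⊥ ∨ L = K := by
    intro K hK L hL
    have hdvd : Nat.card L ∣ p := hK ▸ Subgroup.card_dvd_of_le hL
    rcases (Nat.Prime.eq_one_or_self_of_dvd hp _ hdvd) with h1 | h1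
    · left; exact Subgroup.card_eq_one.1 h1
    · right
      exact Subgroup.eq_of_le_of_card_ge hL (by rw [hK, h1])
  have hRP : R ⊓ P = ⊥ := by
    rcases dich R hRcard (R ⊓ P) inf_le_left with h | h
    · exact h
    · exfalso
      have hwP : w ∈ P := ((le_of_eq h.symm).trans inf_le_right) (mem_zpowers w)
      apply hvu
      have : v = u⁻¹ * w := by rw [hwdef]; group
      rw [this]
      exact mul_mem (inv_mem (mem_zpowers u)) hwP
  have hRQ : R ⊓ Q = ⊥ := by
    rcases dich R hRcard (R ⊓ Q) inf_le_left with h | h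
    · exact h
    · exfalso
      have hwQ : w ∈ Q := ((le_of_eq h.symm).trans inf_le_right) (mem_zpowers w)
      have huQ : u ∈ Q := by
        have : u = w * v⁻¹ := by rw [hwdef]; group
        rw [this]
        exact mul_mem hwQ (inv_mem (mem_zpowers v))
      have hPQ : P = Q := by
        refine Subgroup.eq_of_le_of_card_ge ?_ (by rw [hPcard, hQcard])
        rw [hPdef, zpowers_le]; exact huQ
      exact hvu (hPQ ▸ mem_zpowers v)
  have : R = ⊥ := by
    have h := hdistrib R P Q
    rw [inf_eq_left.2 hRle, hRP, hRQ, sup_idem] at h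
    exact h
  exact hw1 ((zpowers_eq_bot).1 this)

/-- The counting bound: at most `n` solutions of `x ^ n = 1`. -/
theorem aux_count_of_distrib {G : Type*} [Group G] [Finite G] [Fintype G] [DecidableEq G]
    (hdistrib : ∀ A B C : Subgroup G, A ⊓ (B ⊔ C) = (A ⊓ B) ⊔ (A ⊓ C))
    (n : ℕ) (hn : 0 < n) : ({a : G | a ^ n = 1} : Finset G).card ≤ n := by
  classical
  have hcomm := aux_comm_of_distrib hdistrib
  -- prime case
  have prime_case : ∀ p : ℕ, p.Prime → ({a : G | a ^ p = 1} : Finset G).card ≤ p := by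
    intro p hp
    haveI := Fact.mk hp
    by_cases hex : ∃ u : G, u ^ p = 1 ∧ u ≠ 1
    · obtain ⟨u, hup, hu1⟩ := hex
      have hu : orderOf u = p := orderOf_eq_prime hup hu1
      have hsub : ({a : G | a ^ p = 1} : Finset G) ⊆ (zpowers u : Set G).toFinset := by
        intro a ha
        simp only [Finset.mem_filter] at ha
        rw [Set.mem_toFinset]
        by_cases ha1 : a = 1
        · rw [ha1]; exact one_mem _
        · exact aux_unique_of_distrib hdistrib hp hu (orderOf_eq_prime ha.2 ha1)
      calc ({a : G | a ^ p = 1} : Finset G).card ≤ (zpowers u : Set G).toFinset.card :=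
            Finset.card_le_card hsub
        _ = Fintype.card ((zpowers u : Set G)) := Set.toFinset_card _
        _ = Nat.card (zpowers u) := by rw [← Nat.card_eq_fintype_card]; rfl
        _ = p := by rw [Nat.card_zpowers, hu]
    · push_neg at hex
      have : ({a : G | a ^ p = 1} : Finset G) ⊆ {1} := by
        intro a ha
        simp only [Finset.mem_filter] at ha
        simp [hex a ha.2]
      calc ({a : G | a ^ p = 1} : Finset G).card ≤ 1 := by
            simpa using Finset.card_le_card this
        _ ≤ p := hp.one_lt.le
  -- strong induction on n
  induction n using Nat.strong_induction_on with
  | _ n IH =>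
    rcases eq_or_lt_of_le (Nat.one_le_iff_ne_zero.2 hn.ne') with h1 | h1
    · -- n = 1
      rw [← h1]
      have : ({a : G | a ^ 1 = 1} : Finset G) ⊆ {1} := by
        intro a ha
        simp only [Finset.mem_filter, pow_one] at ha
        simp [ha.2]
      simpa using Finset.card_le_card this
    · -- n > 1 : write n = p * m
      set p := n.minFac with hpdef
      have hp : p.Prime := Nat.minFac_prime (by omega)
      set m := n / p with hmdef
      have hnm : n = p * m := (Nat.div_mul_cancel n.minFac_dvd).symm.trans (by ring)
      have hm0 : 0 < m := Nat.div_pos (Nat.minFac_le (by omega)) hp.pos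
      have hmn : m < n := Nat.div_lt_self (by omega) hp.one_lt
      have hmaps : ∀ a ∈ ({a : G | a ^ n = 1} : Finset G),
          (a ^ p) ∈ ({a : G | a ^ m = 1} : Finset G) := by
        intro a ha
        simp only [Finset.mem_filter, Finset.mem_univ, true_and] at ha ⊢
        rw [← pow_mul, ← hnm, ha]
      have hfib : ∀ b ∈ ({a : G | a ^ m = 1} : Finset G),
          ({a ∈ ({a : G | a ^ n = 1} : Finset G) | a ^ p = b} : Finset G).card ≤ p := by
        intro b _
        set F := ({a ∈ ({a : G | a ^ n = 1} : Finset G) | a ^ p = b} : Finset G) with hF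
        rcases Finset.eq_empty_or_nonempty F with hFe | ⟨a0, ha0⟩
        · simp [hFe, hp.pos.le]
        · have ha0' : a0 ^ p = b := (Finset.mem_filter.1 ha0).2
          have hinj : ∀ x ∈ F, ∀ y ∈ F, a0⁻¹ * x = a0⁻¹ * y → x = y := by
            intro x _ y _ h
            exact mul_left_cancel h
          have hmapsF : ∀ x ∈ F, a0⁻¹ * x ∈ ({a : G | a ^ p = 1} : Finset G) := by
            intro x hx
            have hxp : x ^ p = b := (Finset.mem_filter.1 hx).2
            simp only [Finset.mem_filter, Finset.mem_univ, true_and]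
            have hc : Commute a0⁻¹ x := (hcomm a0⁻¹ x)
            rw [hc.mul_pow, inv_pow, ha0', hxp, inv_mul_cancel]
          calc F.card ≤ ({a : G | a ^ p = 1} : Finset G).card :=
                Finset.card_le_card_of_injOn _ hmapsF hinj
            _ ≤ p := prime_case p hp
      calc ({a : G | a ^ n = 1} : Finset G).card
          ≤ p * ({a : G | a ^ m = 1} : Finset G).card :=
            Finset.card_le_mul_card_image_of_maps_to hmaps p hfib
        _ ≤ p * m := Nat.mul_le_mul_left p (IH m hmn hm0)
        _ = n := hnm.symm

/-- A finite group whose subgroup lattice is distributive is cyclic. -/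
theorem cyclic_of_distrib_subgroup_lattice {G : Type*} [Group G] [Finite G]
    (hdistrib : ∀ A B C : Subgroup G, A ⊓ (B ⊔ C) = (A ⊓ B) ⊔ (A ⊓ C)) :
    IsCyclic G := by
  classical
  cases nonempty_fintype G
  exact isCyclic_of_card_pow_eq_one_le (aux_count_of_distrib hdistrib)
end

section
/- Let k ⊂ L be a finite separable field extension of degree n that is not a normal (Galois) extension. Then the number of intermediate fields satisfies |[k,L]| ≤ 2^{n−2}. -/
/-!
Embed `L` into a finite Galois extension `M / k` with group `G`. Then `L` corresponds to a
subgroup `H` of index `n`, intermediate fields of `L / k` to subgroups containing `H`, and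
`L / k` is normal exactly when `H` is. A subgroup containing every square is normal, so some
`g ^ 2 ∉ H`; then `H`, `gH` and `g⁻¹H` are three distinct cosets. A subgroup `K ≥ H` is the
union of the cosets it contains; it always contains `H`, and contains `gH` iff it contains
`g⁻¹H`, so `K` is determined by which of the remaining `n - 2` cosets it contains.
-/

open IntermediateField Module

theorem Set.ncard_le_two_pow_of_forall_mem_of_mem_iff {X : Type*} [Finite X] {o a b : X}
    (hoa : o ≠ a) (hob : o ≠ b) (hab : a ≠ b) {𝒜 : Set (Set X)}
    (h𝒜 : ∀ S ∈ 𝒜, o ∈ S ∧ (a ∈ S ↔ b ∈ S)) :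
    𝒜.ncard ≤ 2 ^ (Nat.card X - 2) := by
  have hinj : Set.InjOn (· \ {o, b}) 𝒜 := by
    intro S hS T hT hST
    have hout : ∀ x, x ≠ o → x ≠ b → (x ∈ S ↔ x ∈ T) := fun x hxo hxb => by
      simpa [hxo, hxb] using Set.ext_iff.mp hST x
    ext x
    obtain rfl | hxo := eq_or_ne x o
    · exact iff_of_true (h𝒜 S hS).1 (h𝒜 T hT).1
    obtain rfl | hxb := eq_or_ne x b
    · rw [← (h𝒜 S hS).2, ← (h𝒜 T hT).2]
      exact hout a hoa.symm hab
    · exact hout x hxo hxb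
  calc 𝒜.ncard ≤ (𝒫 ({o, b}ᶜ : Set X)).ncard :=
        Set.ncard_le_ncard_of_injOn _ (fun S _ => Set.sdiff_subset_compl _ _) hinj
    _ = 2 ^ (Nat.card X - 2) := by
        rw [Set.ncard_powerset, Set.ncard_compl, Set.ncard_pair hob]

namespace Subgroup

variable {G : Type*} [Group G] {H K : Subgroup G}

theorem normal_of_forall_sq_mem (hsq : ∀ g : G, g ^ 2 ∈ H) : H.Normal where
  conj_mem h hh g := by
    have hconj : g * h * g⁻¹ = (g * h) ^ 2 * h⁻¹ * (g ^ 2)⁻¹ := by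
      simp only [pow_two, mul_inv_rev, mul_assoc, mul_inv_cancel_left]
    rw [hconj]
    exact H.mul_mem (H.mul_mem (hsq _) (H.inv_mem hh)) (H.inv_mem (hsq g))

theorem mk_mem_image_mk_iff (hHK : H ≤ K) (g : G) :
    (g : G ⧸ H) ∈ ((↑) : G → G ⧸ H) '' K ↔ g ∈ K := by
  refine ⟨fun ⟨x, hx, hxg⟩ => ?_, fun hg => ⟨g, hg, rfl⟩⟩
  simpa using K.mul_mem hx (hHK (QuotientGroup.eq.mp hxg))

theorem injOn_image_mk_Ici :
    Set.InjOn (fun K : Subgroup G => ((↑) : G → G ⧸ H) '' K) (Set.Ici H) :=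
  fun K hK K' hK' hKK' => by
    ext g
    rw [← mk_mem_image_mk_iff hK, ← mk_mem_image_mk_iff hK']
    exact Set.ext_iff.mp hKK' g

theorem ncard_Ici_le_of_not_normal [H.FiniteIndex] (hH : ¬H.Normal) :
    (Set.Ici H).ncard ≤ 2 ^ (H.index - 2) := by
  obtain ⟨g, hg⟩ : ∃ g : G, g ^ 2 ∉ H := by
    by_contra! hsq
    exact hH (normal_of_forall_sq_mem hsq)
  have hgH : g ∉ H := fun h => hg (H.pow_mem h 2)
  rw [← injOn_image_mk_Ici.ncard_image, index_eq_card]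
  refine Set.ncard_le_two_pow_of_forall_mem_of_mem_iff (o := ((1 : G) : G ⧸ H))
    (a := (g : G ⧸ H)) (b := ((g⁻¹ : G) : G ⧸ H)) ?_ ?_ ?_ ?_
  · simpa [QuotientGroup.eq] using hgH
  · simpa [QuotientGroup.eq] using hgH
  · rw [Ne, QuotientGroup.eq, ← mul_inv_rev, ← pow_two, inv_mem_iff]
    exact hg
  · rintro _ ⟨K, hK, rfl⟩
    refine ⟨(mk_mem_image_mk_iff hK 1).2 K.one_mem, ?_⟩
    rw [mk_mem_image_mk_iff hK, mk_mem_image_mk_iff hK, K.inv_mem_iff]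

end Subgroup

section

variable {k L M : Type*} [Field k] [Field L] [Field M] [Algebra k L] [Algebra k M]

theorem AlgHom.card_intermediateField_le_ncard_Ici_fixingSubgroup [FiniteDimensional k M]
    [IsGalois k M] (ι : L →ₐ[k] M) :
    Nat.card (IntermediateField k L) ≤ (Set.Ici ι.fieldRange.fixingSubgroup).ncard := by
  rw [← Nat.card_coe_set_eq]
  refine Nat.card_le_card_of_injective (fun F => ⟨(F.map ι).fixingSubgroup,
    fixingSubgroup_le (ι.fieldRange_eq_map ▸ map_mono ι le_top)⟩) ?_
  intro F F' hFF'
  apply map_injective ι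
  simpa only [IsGalois.fixedField_fixingSubgroup] using
    congrArg (fun K => fixedField (Subtype.val K)) hFF'

theorem AlgHom.index_fixingSubgroup_fieldRange [IsGalois k M] (ι : L →ₐ[k] M) :
    ι.fieldRange.fixingSubgroup.index = finrank k L := by
  rw [← finrank_eq_fixingSubgroup_index, ι.equivFieldRange.toLinearEquiv.finrank_eq]

theorem AlgHom.normal_of_normal_fixingSubgroup_fieldRange [IsGalois k M] (ι : L →ₐ[k] M)
    (hn : ι.fieldRange.fixingSubgroup.Normal) : Normal k L :=
  have := (InfiniteGalois.normal_iff_isGalois _).mp hn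
  Normal.of_algEquiv ι.equivFieldRange.symm

instance normalClosure.isSeparable [Algebra.IsSeparable k L] :
    Algebra.IsSeparable k (normalClosure k L M) := by
  rw [normalClosure_def]
  have (f : L →ₐ[k] M) : Algebra.IsSeparable k f.fieldRange :=
    AlgEquiv.Algebra.isSeparable f.equivFieldRange
  infer_instance

end

/-- A finite separable field extension of degree `n` which is not Galois has at most
`2 ^ (n - 2)` intermediate fields. -/
theorem card_intermediateField_le_of_not_normal {k L : Type*} [Field k] [Field L]
    [Algebra k L] [FiniteDimensional k L] [Algebra.IsSeparable k L] (h : ¬ Normal k L) :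
    Nat.card (IntermediateField k L) ≤ 2 ^ (Module.finrank k L - 2) := by
  let M := normalClosure k L (AlgebraicClosure L)
  have : IsGalois k M := ⟨⟩
  let ι := IsScalarTower.toAlgHom k L M
  calc Nat.card (IntermediateField k L)
      ≤ (Set.Ici ι.fieldRange.fixingSubgroup).ncard :=
        ι.card_intermediateField_le_ncard_Ici_fixingSubgroup
    _ ≤ 2 ^ (ι.fieldRange.fixingSubgroup.index - 2) :=
        Subgroup.ncard_Ici_le_of_not_normal (mt ι.normal_of_normal_fixingSubgroup_fieldRange h)
    _ = 2 ^ (finrank k L - 2) := by rw [ι.index_fixingSubgroup_fieldRange]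
end
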